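/- arXiv:math/0505370 — 5 statements merged into one kernel-verified Lean document; each statement's English description precedes it below -/
import Mathlib

section
/- For integers a ≥ b ≥ 1, the greatest common divisor of the binomial coefficients C(a+t, t) for t = 1, 2, ..., b equals (a+1) / gcd(a+1, lcm(1, 2, ..., b)). -/
open Finset Nat

private lemma aux_mod_of_dvd_succ {k n : ℕ} (hk : 1 ≤ k) (h : k ∣ n + 1) :
    n % k = k - 1 := by
  obtain ⟨m, hm⟩ := h
  rcases m with _ | m'
  · omega
  · have h1 : k * (m' + 1) = k * m' + k := by ring
    rw [h1] at hm
    have h2 : n = (k - 1) + k * m' := by omega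
    rw [h2, Nat.add_mul_mod_self_left, Nat.mod_eq_of_lt (by omega)]

private lemma aux_pred_mod {k n : ℕ} (h : n % k ≠ 0) : (n - 1) % k = n % k - 1 := by
  rcases Nat.eq_zero_or_pos k with rfl | hk
  · simp
  · have h1 := Nat.div_add_mod n k
    have h2 : n % k < k := Nat.mod_lt _ hk
    have h3 : n - 1 = (n % k - 1) + k * (n / k) := by omega
    rw [h3, Nat.add_mul_mod_self_left, Nat.mod_eq_of_lt (by omega)]

private lemma aux_pow_dvd_lcm {p j m n : ℕ} (hp : p.Prime) (h : p ^ j ∣ Nat.lcm m n) :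
    p ^ j ∣ m ∨ p ^ j ∣ n := by
  rcases eq_or_ne m 0 with rfl | hm
  · exact Or.inl (dvd_zero _)
  rcases eq_or_ne n 0 with rfl | hn
  · exact Or.inr (dvd_zero _)
  have hl : Nat.lcm m n ≠ 0 := Nat.lcm_ne_zero hm hn
  rw [hp.pow_dvd_iff_le_factorization hl, Nat.factorization_lcm hm hn,
    Finsupp.sup_apply, le_sup_iff] at h
  rcases h with h | h
  · exact Or.inl ((hp.pow_dvd_iff_le_factorization hm).mpr h)
  · exact Or.inr ((hp.pow_dvd_iff_le_factorization hn).mpr h)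

private lemma aux_exists_mem_of_pow_dvd_lcm {p j : ℕ} (hp : p.Prime) (hj : 1 ≤ j)
    (s : Finset ℕ) (h : p ^ j ∣ s.lcm id) : ∃ t ∈ s, p ^ j ∣ t := by
  induction s using Finset.induction_on with
  | empty =>
    simp only [Finset.lcm_empty] at h
    have hpj : p ^ j = 1 := Nat.dvd_one.mp h
    have hple : p ≤ p ^ j := Nat.le_self_pow (by omega) p
    have := hp.two_le
    omega
  | insert x t hx ih =>
    rw [Finset.lcm_insert, lcm_eq_nat_lcm] at h
    rcases aux_pow_dvd_lcm hp h with h' | h'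
    · exact ⟨x, Finset.mem_insert_self _ _, h'⟩
    · obtain ⟨u, hu, hu'⟩ := ih h'
      exact ⟨u, Finset.mem_insert_of_mem hu, hu'⟩

private lemma aux_key_id (a t : ℕ) (ht : 1 ≤ t) :
    (a + t).choose t * t = (a + t).choose (t - 1) * (a + 1) := by
  obtain ⟨k, rfl⟩ : ∃ k, t = k + 1 := ⟨t - 1, by omega⟩
  have h := Nat.choose_succ_right_eq (a + (k + 1)) k
  have h2 : a + (k + 1) - k = a + 1 := by omega
  rw [h2] at h
  simpa using h

private lemma aux_choose_factorization_le {p : ℕ} (hp : p.Prime) (a e : ℕ)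
    (he : e ≤ (a + 1).factorization p) :
    ((a + p ^ e).choose (p ^ e)).factorization p ≤ (a + 1).factorization p - e := by
  haveI : Fact p.Prime := ⟨hp⟩
  set N := a + 1 with hN
  set vN := N.factorization p with hvN
  set q := p ^ e with hq
  have hN0 : N ≠ 0 := by omega
  have hqN : q ∣ N := (pow_dvd_pow p he).trans (Nat.ordProj_dvd N p)
  have hq1 : 1 ≤ q := Nat.one_le_pow _ _ hp.pos
  set B := Nat.log p (a + q) + 1 with hB
  have hC0 : 0 < (a + q).choose q := Nat.choose_pos (Nat.le_add_left q a)
  have hkum := hp.emultiplicity_choose' (n := a) (k := q) (b := B) (by omega)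
  have hcast : (↑(((a + q).choose q).factorization p) : ℕ∞) =
      ↑(#(filter (fun i => p ^ i ≤ q % p ^ i + a % p ^ i) (Ico 1 B))) := by
    rw [Nat.factorization_def _ hp, padicValNat_eq_emultiplicity hC0.ne', hkum]
  have hcard : ((a + q).choose q).factorization p =
      #(filter (fun i => p ^ i ≤ q % p ^ i + a % p ^ i) (Ico 1 B)) := by
    exact_mod_cast hcast
  rw [hcard]
  have hsub : filter (fun i => p ^ i ≤ q % p ^ i + a % p ^ i) (Ico 1 B) ⊆
      Ico (e + 1) (vN + 1) := by
    intro i hi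
    rw [Finset.mem_filter, Finset.mem_Ico] at hi
    obtain ⟨⟨hi1, hiB⟩, hcond⟩ := hi
    have hpi1 : 1 ≤ p ^ i := Nat.one_le_pow _ _ hp.pos
    rw [Finset.mem_Ico]
    constructor
    · -- e + 1 ≤ i
      by_contra hle
      push_neg at hle
      have hie : i ≤ e := by omega
      have hq0 : q % p ^ i = 0 := Nat.mod_eq_zero_of_dvd (pow_dvd_pow p hie)
      have hpiN : p ^ i ∣ N := (pow_dvd_pow p hie).trans hqN
      have ha : a % p ^ i = p ^ i - 1 := aux_mod_of_dvd_succ hpi1 hpiN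
      omega
    · -- i ≤ vN
      by_contra hgt
      push_neg at hgt
      have hvi : vN < i := by omega
      have hqi : q < p ^ i :=
        lt_of_le_of_lt (Nat.pow_le_pow_right hp.pos he)
          (Nat.pow_lt_pow_right hp.one_lt hvi)
      have hq0 : q % p ^ i = q := Nat.mod_eq_of_lt hqi
      have hNi : ¬ p ^ i ∣ N := fun hdv =>
        absurd ((hp.pow_dvd_iff_le_factorization hN0).mp hdv) (by omega)
      have hr : N % p ^ i ≠ 0 := fun h0 => hNi (Nat.dvd_of_mod_eq_zero h0)
      have hqr : q ∣ N % p ^ i :=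
        (Nat.dvd_mod_iff (pow_dvd_pow p (by omega : e ≤ i))).mpr hqN
      have hfin : N % p ^ i + q ≤ p ^ i := by
        obtain ⟨c, hc⟩ := hqr
        obtain ⟨Q, hQ⟩ : q ∣ p ^ i := pow_dvd_pow p (by omega)
        have hlt : N % p ^ i < p ^ i := Nat.mod_lt _ (by omega)
        have hqcQ : q * c < q * Q := by rw [← hc, ← hQ]; exact hlt
        have hcQ : c < Q := Nat.lt_of_mul_lt_mul_left hqcQ
        have hstep : q * (c + 1) ≤ q * Q := Nat.mul_le_mul_left q hcQ
        have : q * (c + 1) = N % p ^ i + q := by rw [hc]; ring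
        rw [this] at hstep
        exact le_of_le_of_eq hstep hQ.symm
      have ha : a % p ^ i = N % p ^ i - 1 := by
        have haN : a = N - 1 := by omega
        rw [haN, aux_pred_mod hr]
      omega
  calc #(filter (fun i => p ^ i ≤ q % p ^ i + a % p ^ i) (Ico 1 B))
      ≤ #(Ico (e + 1) (vN + 1)) := Finset.card_le_card hsub
    _ = vN - e := by rw [Nat.card_Ico]; omega

theorem stmt_0 (a b : ℕ) (hb : 1 ≤ b) (hba : b ≤ a) :
    (Finset.Icc 1 b).gcd (fun t => (a + t).choose t) =
      (a + 1) / Nat.gcd (a + 1) ((Finset.Icc 1 b).lcm id) := by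
  set N := a + 1 with hN
  set L := (Finset.Icc 1 b).lcm id with hL
  set g := Nat.gcd N L with hg
  set d := (Finset.Icc 1 b).gcd (fun t => (a + t).choose t) with hd
  have hN0 : N ≠ 0 := by omega
  have hL0 : L ≠ 0 := by
    rw [hL]
    intro h
    rw [Finset.lcm_eq_zero_iff] at h
    obtain ⟨x, hx, hx0⟩ := h
    simp only [id_eq] at hx0
    subst hx0
    simp only [Finset.mem_Icc] at hx
    omega
  have hgN : g ∣ N := Nat.gcd_dvd_left _ _
  have hg0 : g ≠ 0 := fun h => hN0 (by simpa [h] using hgN)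
  have hNg0 : N / g ≠ 0 := by
    have := Nat.div_pos (Nat.le_of_dvd (by omega) hgN) (by omega)
    omega
  have h1mem : (1 : ℕ) ∈ Finset.Icc 1 b := Finset.mem_Icc.mpr ⟨le_refl 1, hb⟩
  have hdN : d ∣ N := by
    have h := Finset.gcd_dvd (f := fun t => (a + t).choose t) h1mem
    simpa using h
  have hd0 : d ≠ 0 := fun h => hN0 (by simpa [h] using hdN)
  have hA : N / g ∣ d := by
    apply Finset.dvd_gcd
    intro t ht
    obtain ⟨ht1, htb⟩ := Finset.mem_Icc.mp ht
    set C := (a + t).choose t with hC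
    have hid : C * t = (a + t).choose (t - 1) * N := aux_key_id a t ht1
    have hNdvd : N ∣ C * t := ⟨(a + t).choose (t - 1), by rw [hid]; ring⟩
    set g' := Nat.gcd N t with hg'
    have hg'0 : 0 < g' := Nat.gcd_pos_of_pos_left _ (by omega)
    have h1 : N / g' ∣ C := by
      have hco : Nat.Coprime (N / g') (t / g') := Nat.coprime_div_gcd_div_gcd hg'0
      have hdd : N / g' * g' ∣ C * (t / g') * g' := by
        rw [Nat.div_mul_cancel (Nat.gcd_dvd_left N t), mul_assoc,
          Nat.div_mul_cancel (Nat.gcd_dvd_right N t)]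
        exact hNdvd
      have h2 : N / g' ∣ C * (t / g') := (mul_dvd_mul_iff_right hg'0.ne').mp hdd
      exact hco.dvd_of_dvd_mul_right h2
    have hg'g : g' ∣ g := Nat.dvd_gcd (Nat.gcd_dvd_left _ _)
      ((Nat.gcd_dvd_right N t).trans (Finset.dvd_lcm ht))
    have h3 : N / g ∣ N / g' := by
      obtain ⟨c, hc⟩ := hg'g
      obtain ⟨m, hm⟩ := hgN
      have e1 : N / g = m := by rw [hm, Nat.mul_div_cancel_left _ (by omega)]
      have e2 : N / g' = c * m := by
        rw [hm, hc, mul_assoc, Nat.mul_div_cancel_left _ hg'0]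
      rw [e1, e2]
      exact dvd_mul_left m c
    exact h3.trans h1
  have hB : d ∣ N / g := by
    rw [← Nat.factorization_le_iff_dvd hd0 hNg0, Finsupp.le_def]
    intro p
    by_cases hp : p.Prime
    swap
    · simp [Nat.factorization_eq_zero_of_not_prime _ hp]
    have hfact : (N / g).factorization p =
        N.factorization p - min (N.factorization p) (L.factorization p) := by
      rw [Nat.factorization_div hgN, hg, Nat.factorization_gcd hN0 hL0,
        Finsupp.tsub_apply, Finsupp.inf_apply]
    set vN := N.factorization p with hvN
    set e := min vN (L.factorization p) with he
    rw [hfact]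
    have hqb : p ^ e ≤ b := by
      rcases Nat.eq_zero_or_pos e with h0 | h1
      · rw [h0]; simpa using hb
      · have hdvdL : p ^ e ∣ L :=
          (pow_dvd_pow p (min_le_right vN (L.factorization p))).trans (Nat.ordProj_dvd L p)
        obtain ⟨t, hts, hpt⟩ := aux_exists_mem_of_pow_dvd_lcm hp h1 _ hdvdL
        obtain ⟨ht1, htb⟩ := Finset.mem_Icc.mp hts
        exact (Nat.le_of_dvd (by omega) hpt).trans htb
    have hqmem : p ^ e ∈ Finset.Icc 1 b :=
      Finset.mem_Icc.mpr ⟨Nat.one_le_pow _ _ hp.pos, hqb⟩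
    have hdC : d ∣ (a + p ^ e).choose (p ^ e) :=
      Finset.gcd_dvd (f := fun t => (a + t).choose t) hqmem
    have hC0 : (a + p ^ e).choose (p ^ e) ≠ 0 :=
      (Nat.choose_pos (Nat.le_add_left _ a)).ne'
    have hdCf : d.factorization p ≤ ((a + p ^ e).choose (p ^ e)).factorization p :=
      (Nat.factorization_le_iff_dvd hd0 hC0).mpr hdC p
    exact hdCf.trans (aux_choose_factorization_le hp a e (min_le_left _ _))
  exact Nat.dvd_antisymm hB hA
end

section
/- Let p be a prime and a ≥ b ≥ 1 integers. Then p divides the binomial coefficient C(a+t, t) for every t with 1 ≤ t ≤ b if and only if p^(⌊log_p b⌋ + 1) divides a + 1, i.e., if and only if the p-adic valuation of a+1 is strictly greater than the p-adic valuation of lcm(1, ..., b). -/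
private lemma mod_of_dvd_succ {q a : ℕ} (hq : 0 < q) (h : q ∣ a + 1) : a % q = q - 1 := by
  obtain ⟨c, hc⟩ := h
  rcases c with _ | d
  · omega
  · have h1 : q * (d + 1) = q * d + q := Nat.mul_succ q d
    have h2 : a = q * d + (q - 1) := by omega
    rw [h2, Nat.mul_add_mod, Nat.mod_eq_of_lt (by omega)]

open Nat in
private lemma carry_iff {p : ℕ} (hp : p.Prime) (a t : ℕ) (ht : 1 ≤ t) :
    p ∣ (a + t).choose t ↔ ∃ i, 1 ≤ i ∧ p ^ i ≤ t % p ^ i + a % p ^ i := by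
  haveI : Fact p.Prime := ⟨hp⟩
  have hpos : 0 < (a + t).choose t := Nat.choose_pos (le_add_left t a)
  rw [dvd_iff_padicValNat_ne_zero hpos.ne',
    padicValNat_choose' (p := p) (b := log p (a + t) + 1) (lt_succ_self _),
    Ne, Finset.card_eq_zero, ← Ne, ← Finset.nonempty_iff_ne_empty]
  constructor
  · rintro ⟨i, hi⟩
    simp only [Finset.mem_filter, Finset.mem_Ico] at hi
    exact ⟨i, hi.1.1, hi.2⟩
  · rintro ⟨i, hi1, hi2⟩
    refine ⟨i, ?_⟩
    simp only [Finset.mem_filter, Finset.mem_Ico]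
    refine ⟨⟨hi1, ?_⟩, hi2⟩
    have hm1 := Nat.mod_le t (p ^ i)
    have hm2 := Nat.mod_le a (p ^ i)
    have h1 : p ^ i ≤ a + t := by omega
    have := (Nat.le_log_iff_pow_le hp.one_lt (by omega : a + t ≠ 0)).mpr h1
    omega

private lemma pow_dvd_lcm_iff {p k m n : ℕ} (hp : p.Prime) (hm : m ≠ 0) (hn : n ≠ 0) :
    p ^ k ∣ Nat.lcm m n ↔ p ^ k ∣ m ∨ p ^ k ∣ n := by
  rw [hp.pow_dvd_iff_le_factorization (Nat.lcm_ne_zero hm hn),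
    Nat.factorization_lcm hm hn, Finsupp.sup_apply, le_sup_iff,
    ← hp.pow_dvd_iff_le_factorization hm, ← hp.pow_dvd_iff_le_factorization hn]

private lemma pow_dvd_finset_lcm {p k : ℕ} (hp : p.Prime) (hk : k ≠ 0) (s : Finset ℕ)
    (hs : ∀ n ∈ s, n ≠ 0) (h : p ^ k ∣ s.lcm id) : ∃ n ∈ s, p ^ k ∣ n := by
  induction s using Finset.induction with
  | empty =>
    rw [Finset.lcm_empty, Nat.dvd_one] at h
    have hp1 : p ∣ 1 := h ▸ dvd_pow_self p hk
    exact absurd (Nat.dvd_one.mp hp1) hp.one_lt.ne'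
  | @insert x s hx ih =>
    rw [Finset.lcm_insert] at h
    have hlne : s.lcm id ≠ 0 := by
      intro h0
      rw [Finset.lcm_eq_zero_iff] at h0
      obtain ⟨n, hn, hn0⟩ := h0
      exact hs n (Finset.mem_insert_of_mem hn) hn0
    have hx0 : x ≠ 0 := hs x (Finset.mem_insert_self x s)
    rcases (pow_dvd_lcm_iff hp hx0 hlne).mp h with h' | h'
    · exact ⟨x, Finset.mem_insert_self x s, h'⟩
    · obtain ⟨n, hn, hd⟩ := ih (fun n hn => hs n (Finset.mem_insert_of_mem hn)) h'
      exact ⟨n, Finset.mem_insert_of_mem hn, hd⟩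

private lemma padicValNat_lcm_Icc {p b : ℕ} (hp : p.Prime) (hb : 1 ≤ b) :
    padicValNat p ((Finset.Icc 1 b).lcm id) = Nat.log p b := by
  haveI : Fact p.Prime := ⟨hp⟩
  have hs : ∀ n ∈ Finset.Icc 1 b, n ≠ 0 := by
    intro n hn; rw [Finset.mem_Icc] at hn; omega
  have hne : (Finset.Icc 1 b).lcm id ≠ 0 := by
    intro h0
    rw [Finset.lcm_eq_zero_iff] at h0
    obtain ⟨n, hn, hn0⟩ := h0
    exact hs n hn hn0
  apply le_antisymm
  · by_contra hcon
    push_neg at hcon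
    have hd : p ^ (Nat.log p b + 1) ∣ (Finset.Icc 1 b).lcm id :=
      (padicValNat_dvd_iff_le hne).mpr hcon
    obtain ⟨n, hn, hdvd⟩ := pow_dvd_finset_lcm hp (by omega) _ hs hd
    rw [Finset.mem_Icc] at hn
    have h1 : p ^ (Nat.log p b + 1) ≤ n := Nat.le_of_dvd (by omega) hdvd
    have h2 : p ^ (Nat.log p b + 1) ≤ b := by omega
    have := (Nat.le_log_iff_pow_le hp.one_lt (by omega : b ≠ 0)).mpr h2
    omega
  · have hmem : p ^ Nat.log p b ∈ Finset.Icc 1 b := by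
      rw [Finset.mem_Icc]
      exact ⟨Nat.one_le_pow _ _ hp.pos, Nat.pow_log_le_self p (by omega)⟩
    have := Finset.dvd_lcm (f := id) hmem
    exact (padicValNat_dvd_iff_le hne).mp this

theorem stmt_2 (p a b : ℕ) (hp : p.Prime) (hb : 1 ≤ b) (hba : b ≤ a) :
    ((∀ t, 1 ≤ t → t ≤ b → p ∣ (a + t).choose t) ↔ p ^ (Nat.log p b + 1) ∣ (a + 1)) ∧
    (p ^ (Nat.log p b + 1) ∣ (a + 1) ↔
      padicValNat p ((Finset.Icc 1 b).lcm id) < padicValNat p (a + 1)) := by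
  haveI : Fact p.Prime := ⟨hp⟩
  have hp1 : 1 < p := hp.one_lt
  constructor
  · constructor
    · -- forward
      intro hall
      by_contra hnd
      set e := padicValNat p (a + 1) with he
      have heL : e ≤ Nat.log p b := by
        by_contra hcon
        push_neg at hcon
        exact hnd ((padicValNat_dvd_iff_le (by omega)).mpr (by omega))
      have hpe_dvd : p ^ e ∣ a + 1 := pow_padicValNat_dvd
      have hpe1_ndvd : ¬ p ^ (e + 1) ∣ a + 1 := pow_succ_padicValNat_not_dvd (by omega)
      set t := p ^ e with ht
      have ht1 : 1 ≤ t := Nat.one_le_pow _ _ hp.pos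
      have htb : t ≤ b :=
        le_trans (Nat.pow_le_pow_right hp.pos heL) (Nat.pow_log_le_self p (by omega))
      have hdvd := hall t ht1 htb
      rw [carry_iff hp a t ht1] at hdvd
      obtain ⟨i, hi1, hi2⟩ := hdvd
      obtain ⟨m, hm⟩ := hpe_dvd
      have hpm : ¬ p ∣ m := by
        rintro ⟨c, hc⟩
        exact hpe1_ndvd ⟨c, by rw [hm, hc, pow_succ]; ring⟩
      rcases le_or_gt i e with hie | hie
      · -- i ≤ e : no carry
        have hpi : 0 < p ^ i := Nat.pow_pos hp.pos
        have h1 : t % p ^ i = 0 := by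
          obtain ⟨c, hc⟩ := (pow_dvd_pow p hie : p ^ i ∣ t)
          rw [ht, hc, Nat.mul_mod_right]
        have h2 : a % p ^ i = p ^ i - 1 :=
          mod_of_dvd_succ hpi (dvd_trans (pow_dvd_pow p hie) ⟨m, hm⟩)
        omega
      · -- i > e : no carry
        set j := i - e with hj
        have hij : i = e + j := by omega
        have hj1 : 1 ≤ j := by omega
        have hpow : p ^ e * p ^ j = p ^ i := by rw [hij, pow_add]
        have hpe : 1 ≤ p ^ e := Nat.one_le_pow _ _ hp.pos
        have hpj : 1 ≤ p ^ j := Nat.one_le_pow _ _ hp.pos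
        have h1 : t % p ^ i = p ^ e := Nat.mod_eq_of_lt (Nat.pow_lt_pow_right hp1 (by omega))
        set r := m % p ^ j with hr
        have hr1 : 1 ≤ r := by
          rcases Nat.eq_zero_or_pos r with h0 | h0
          · exact absurd (dvd_trans (dvd_pow_self p (by omega : j ≠ 0))
              (Nat.dvd_of_mod_eq_zero h0)) hpm
          · exact h0
        have hrlt : r + 1 ≤ p ^ j := Nat.mod_lt _ (by omega)
        have hb1 : p ^ e * (r + 1) ≤ p ^ e * p ^ j := Nat.mul_le_mul_left _ hrlt
        rw [Nat.mul_add, mul_one] at hb1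
        have hmm : (a + 1) % p ^ i = p ^ e * r := by
          rw [hm, hij, pow_add, Nat.mul_mod_mul_left]
        have hdm := Nat.div_add_mod (a + 1) (p ^ i)
        have hper : 0 < p ^ e * r := Nat.mul_pos (by omega) (by omega)
        have haeq : a = p ^ i * ((a + 1) / p ^ i) + (p ^ e * r - 1) := by omega
        have h2 : a % p ^ i = p ^ e * r - 1 := by
          rw [haeq, Nat.mul_add_mod, Nat.mod_eq_of_lt (by omega)]
        omega
    · -- backward
      intro hdvd t ht1 htb
      rw [carry_iff hp a t ht1]
      set e := padicValNat p t with he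
      have hpe_dvd : p ^ e ∣ t := pow_padicValNat_dvd
      have hpe1_ndvd : ¬ p ^ (e + 1) ∣ t := pow_succ_padicValNat_not_dvd (by omega)
      have hpet : p ^ e ≤ t := Nat.le_of_dvd (by omega) hpe_dvd
      have heL : e ≤ Nat.log p b := by
        have : p ^ e ≤ b := le_trans hpet htb
        exact (Nat.le_log_iff_pow_le hp1 (by omega)).mpr this
      refine ⟨e + 1, by omega, ?_⟩
      have hadvd : p ^ (e + 1) ∣ a + 1 :=
        dvd_trans (pow_dvd_pow p (by omega)) hdvd
      have ha : a % p ^ (e + 1) = p ^ (e + 1) - 1 :=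
        mod_of_dvd_succ (Nat.pow_pos hp.pos) hadvd
      obtain ⟨u, hu⟩ := hpe_dvd
      have hpu : ¬ p ∣ u := by
        rintro ⟨c, hc⟩
        exact hpe1_ndvd ⟨c, by rw [hu, hc, pow_succ]; ring⟩
      have htm : t % p ^ (e + 1) = p ^ e * (u % p) := by
        rw [hu, pow_succ, Nat.mul_mod_mul_left]
      have hup : 1 ≤ u % p := by
        rcases Nat.eq_zero_or_pos (u % p) with h0 | h0
        · exact absurd (Nat.dvd_of_mod_eq_zero h0) hpu
        · exact h0
      have hpe : 1 ≤ p ^ e := Nat.one_le_pow _ _ hp.pos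
      have hle : p ^ e ≤ t % p ^ (e + 1) := by
        rw [htm]; exact Nat.le_mul_of_pos_right _ hup
      have hps : p ^ e < p ^ (e + 1) := Nat.pow_lt_pow_succ hp1
      omega
  · rw [padicValNat_lcm_Icc hp hb, padicValNat_dvd_iff_le (by omega : a + 1 ≠ 0)]
    omega
end

section
/- Let k ≥ 2, let a_1, ..., a_k be integers and p_2, ..., p_k positive integers, and set ℓ_j = a_j + p_{j+1} + p_{j+2} + ... + p_k for 1 ≤ j ≤ k (so ℓ_k = a_k). Then the sum, over all (k−1)-tuples (i_2, ..., i_k) with 0 ≤ i_j ≤ p_j, of a_k · ∏_{j : i_j = 0} ℓ_j · ∏_{j : i_j = 1} (a_{j-1} − a_j + 1), equals ℓ_1 · ℓ_2 ··· ℓ_k. -/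
/-! Expanding the product `∏_{j=2}^{k} ∑_{v=0}^{p_j} w_j(v)`, where `w_j(0) = ℓ_j`,
`w_j(1) = a_{j-1} - a_j + 1` and `w_j(v) = 1` otherwise, and multiplying by `a_k` gives the sum in
the statement. Each factor `ℓ_j + (a_{j-1} - a_j + 1) + (p_j - 1)` telescopes to `ℓ_{j-1}`,
so the product is `ℓ_1 ⋯ ℓ_{k-1}`, and `a_k = ℓ_k`. -/

open Finset

lemma prod_filter_eq_zero_mul_prod_filter_eq_one {ι M : Type*} [CommMonoid M] (s : Finset ι)
    (g : ι → ℕ) (A B : ι → M) :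
    (∏ x ∈ s with g x = 0, A x) * ∏ x ∈ s with g x = 1, B x =
      ∏ x ∈ s, if g x = 0 then A x else if g x = 1 then B x else 1 := by
  rw [prod_ite, prod_ite, filter_filter, prod_const_one, mul_one]
  congr 2
  exact filter_congr fun x _ => by omega

lemma sum_range_ite_eq_zero_ite_eq_one {R : Type*} [AddCommMonoidWithOne R] (m : ℕ) (A B : R) :
    ∑ v ∈ range (m + 2), (if v = 0 then A else if v = 1 then B else 1) = A + B + m := by
  rw [sum_range_succ', sum_range_succ']
  simp only [Nat.add_eq_zero_iff, one_ne_zero, and_false, and_self, ↓reduceIte, Nat.add_eq_right,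
    sum_const, card_range, nsmul_one, zero_add]
  abel

lemma prod_Icc_add_one_sub_one {M : Type*} [CommMonoid M] (f : ℕ → M) (m n : ℕ) :
    ∏ j ∈ Icc (m + 1) (n + 1), f (j - 1) = ∏ j ∈ Icc m n, f j := by
  rw [← map_add_right_Icc, prod_map]
  simp

lemma ell_sub_one_eq {k : ℕ} {a : ℕ → ℤ} {p : ℕ → ℕ} {ℓ : ℕ → ℤ}
    (hℓ : ∀ j, ℓ j = a j + ∑ t ∈ Icc (j + 1) k, (p t : ℤ)) {j : ℕ} (hj : 1 ≤ j) (hjk : j ≤ k) :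
    ℓ (j - 1) = ℓ j + (a (j - 1) - a j + 1) + ((p j : ℤ) - 1) := by
  have hIcc : Icc (j - 1 + 1) k = insert j (Icc (j + 1) k) := by
    ext x
    simp only [mem_Icc, mem_insert]
    omega
  rw [hℓ (j - 1), hℓ j, hIcc, sum_insert (by simp)]
  ring

theorem stmt_5 (k : ℕ) (hk : 2 ≤ k) (a : ℕ → ℤ) (p : ℕ → ℕ)
    (hp : ∀ j, 2 ≤ j → j ≤ k → 1 ≤ p j)
    (ℓ : ℕ → ℤ)
    (hℓ : ∀ j, ℓ j = a j + ∑ t ∈ Finset.Icc (j + 1) k, (p t : ℤ)) :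
    (∑ i ∈ (Finset.Icc 2 k).pi (fun j => Finset.range (p j + 1)),
        a k * (∏ j ∈ (Finset.Icc 2 k).attach.filter (fun j => i j.1 j.2 = 0), ℓ j.1) *
          (∏ j ∈ (Finset.Icc 2 k).attach.filter (fun j => i j.1 j.2 = 1),
            (a (j.1 - 1) - a j.1 + 1))) =
      ∏ j ∈ Finset.Icc 1 k, ℓ j := by
  have factor (j) (hj : j ∈ Icc 2 k) :
      ∑ v ∈ range (p j + 1), (if v = 0 then ℓ j else if v = 1 then a (j - 1) - a j + 1 else 1) =
        ℓ (j - 1) := by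
    rw [mem_Icc] at hj
    obtain ⟨m, hm⟩ : ∃ m, p j = m + 1 := Nat.exists_eq_add_of_le' (hp j hj.1 hj.2)
    rw [hm, sum_range_ite_eq_zero_ite_eq_one, ell_sub_one_eq hℓ (by omega) hj.2, hm]
    push_cast
    ring
  obtain ⟨n, rfl⟩ : ∃ n, k = n + 2 := ⟨k - 2, by omega⟩
  have expand := prod_congr rfl factor
  rw [prod_sum] at expand
  simp_rw [mul_assoc, prod_filter_eq_zero_mul_prod_filter_eq_one]
  rw [← mul_sum, expand, prod_Icc_add_one_sub_one ℓ 1 (n + 1),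
    prod_Icc_succ_top (by omega : 1 ≤ n + 1 + 1) ℓ, hℓ (n + 2)]
  simp [mul_comm]
end

section
/- Let k ≥ 1, let p_1, ..., p_k be positive integers and a_1, ..., a_k integers, and set ℓ_j = a_j + p_{j+1} + ... + p_k (so ℓ_k = a_k). Define b : ∏_j {0, 1, ..., p_j} → ℤ by b(i) = ∏_j c_j(i_j), where c_j(0) = −ℓ_j and c_j(m) = (−1)^(p_j − m) for 1 ≤ m ≤ p_j. Then b satisfies: (Type 1) b(i_1,...,i_{k−1}, 0) + a_k · b(i_1,...,i_{k−1}, p_k) = 0 for all choices of i_1,...,i_{k−1}; (Type 2) b(..., i_j, ...) + b(..., i_j + 1, ...) = 0 whenever 1 ≤ i_j ≤ p_j − 1 and all other components are fixed; (Type 3) for each 1 ≤ j ≤ k−1 and all fixed other components, b(..., 0, p_{j+1}, ...) − b(..., p_j, 0, ...) + (a_j − a_{j+1} + p_{j+1}) · b(..., p_j, p_{j+1}, ...) = 0, where the displayed entries are in positions j and j+1. -/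
/-!
Each of the three relations only involves the factors of `b i = ∏ j, c j (i j)` in one or two
adjacent positions, so after pulling out the common product of the remaining factors it becomes an
identity between values of the `c j`. Since `c j m = ±1` alternates in sign on `1, …, p j` and
`c j (p j) = 1`, Types 1 and 2 are immediate, and Type 3 reduces to the recursion
`ℓ j = a j + p (j + 1) + ℓ (j + 1) - a (j + 1)`.
-/

open Finset Function

section ProdUpdate

variable {ι M : Type*} [DecidableEq ι] [CommMonoid M] {α : ι → Type*}
  (f : ∀ j, α j → M) (i : ∀ j, α j)

theorem Finset.prod_apply_update_of_mem {s : Finset ι} {j : ι} (hj : j ∈ s) (x : α j) :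
    ∏ t ∈ s, f t (update i j x t) = f j x * ∏ t ∈ s.erase j, f t (i t) := by
  rw [← mul_prod_erase s _ hj, update_self]
  congr 1
  exact prod_congr rfl fun t ht => by rw [update_of_ne (ne_of_mem_erase ht)]

theorem Finset.prod_apply_update_update [Fintype ι] {j j' : ι} (hne : j ≠ j')
    (x : α j) (y : α j') :
    ∏ t, f t (update (update i j x) j' y t) =
      f j x * f j' y * ∏ t ∈ (univ.erase j').erase j, f t (i t) := by
  rw [prod_apply_update_of_mem f _ (mem_univ j'),
    prod_apply_update_of_mem f i (mem_erase.2 ⟨hne, mem_univ j⟩), mul_left_comm, mul_assoc]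

end ProdUpdate

namespace Fin

theorem filter_lt_eq_empty {k : ℕ} {j : Fin k} (hj : (j : ℕ) = k - 1) :
    univ.filter (fun t => j < t) = ∅ := by
  ext t
  simp only [mem_filter, mem_univ, true_and, notMem_empty, iff_false, Fin.lt_def]
  omega

theorem filter_lt_eq_insert {k : ℕ} {j j' : Fin k} (h : (j : ℕ) + 1 = j') :
    univ.filter (fun t => j < t) = insert j' (univ.filter (fun t => j' < t)) := by
  ext t
  simp only [mem_filter, mem_univ, true_and, mem_insert, Fin.lt_def, Fin.ext_iff]
  omega

end Fin

theorem stmt_7 (k : ℕ) (p : Fin k → ℕ) (hp : ∀ j, 1 ≤ p j)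
    (a : Fin k → ℤ) (ℓ : Fin k → ℤ)
    (hℓ : ∀ j, ℓ j = a j + ∑ t ∈ Finset.univ.filter (fun t => j < t), (p t : ℤ))
    (c : (j : Fin k) → ℕ → ℤ)
    (hc0 : ∀ j, c j 0 = -ℓ j)
    (hcm : ∀ j m, 1 ≤ m → m ≤ p j → c j m = (-1) ^ (p j - m))
    (b : ((j : Fin k) → Fin (p j + 1)) → ℤ)
    (hb : ∀ i, b i = ∏ j, c j (i j))
    (jl : Fin k) (hjl : (jl : ℕ) = k - 1) :
    -- Type 1
    (∀ i : (j : Fin k) → Fin (p j + 1),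
        b (Function.update i jl 0) + a jl * b (Function.update i jl (Fin.last (p jl))) = 0) ∧
    -- Type 2
    (∀ (j : Fin k) (m : ℕ) (h1 : 1 ≤ m) (h2 : m + 1 ≤ p j)
        (i : (j : Fin k) → Fin (p j + 1)),
        b (Function.update i j ⟨m, by omega⟩) + b (Function.update i j ⟨m + 1, by omega⟩) = 0) ∧
    -- Type 3
    (∀ (j j' : Fin k), (j : ℕ) + 1 = (j' : ℕ) →
        ∀ i : (j : Fin k) → Fin (p j + 1),
        b (Function.update (Function.update i j 0) j' (Fin.last (p j'))) -
          b (Function.update (Function.update i j (Fin.last (p j))) j' 0) +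
          (a j - a j' + (p j' : ℤ)) *
            b (Function.update (Function.update i j (Fin.last (p j))) j' (Fin.last (p j'))) = 0) := by
  have hb₁ : ∀ i j v, b (update i j v) = c j v * ∏ t ∈ univ.erase j, c t (i t) := fun i j v => by
    rw [hb]; exact prod_apply_update_of_mem (fun t (m : Fin (p t + 1)) => c t m) i (mem_univ j) v
  have hb₂ : ∀ i j j' (hne : j ≠ j') v w, b (update (update i j v) j' w) =
      c j v * c j' w * ∏ t ∈ (univ.erase j').erase j, c t (i t) := fun i j j' hne v w => by
    rw [hb]; exact prod_apply_update_update (fun t (m : Fin (p t + 1)) => c t m) i hne v w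
  have hc_last : ∀ j, c j (p j) = 1 := fun j => by
    rw [hcm j (p j) (hp j) le_rfl, Nat.sub_self, pow_zero]
  refine ⟨fun i => ?_, fun j m h1 h2 i => ?_, fun j j' hjj' i => ?_⟩
  · have hℓ_last : ℓ jl = a jl := by rw [hℓ, Fin.filter_lt_eq_empty hjl, sum_empty, add_zero]
    rw [hb₁, hb₁]
    simp only [Fin.val_zero, Fin.val_last, hc0, hc_last, hℓ_last]
    ring
  · have hsign : c j m = -c j (m + 1) := by
      rw [hcm j m h1 (by omega), hcm j (m + 1) (by omega) h2,
        show p j - m = p j - (m + 1) + 1 by omega, pow_succ]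
      ring
    rw [hb₁, hb₁, hsign]
    ring
  · have hne : j ≠ j' := Fin.ne_of_val_ne (by omega)
    have hℓ_succ : ℓ j = a j + p j' + (ℓ j' - a j') := by
      rw [hℓ j, hℓ j', Fin.filter_lt_eq_insert hjj', sum_insert (by simp)]
      ring
    rw [hb₂ _ _ _ hne, hb₂ _ _ _ hne, hb₂ _ _ _ hne]
    simp only [Fin.val_zero, Fin.val_last, hc0, hc_last, hℓ_succ]
    ring
end

section
/- Let a ≥ b ≥ 1 and let g(a, b) = gcd of the binomial coefficients C(a+t, t) for 1 ≤ t ≤ b. Then for any sequence of column lengths a_1 ≥ a_2 ≥ ... ≥ a_m ≥ 1 (m ≥ 2) and any prime p: p divides gcd_{j=1}^{m−1} g(a_j, a_{j+1}) if and only if for every j, the p-adic valuation of a_j + 1 is at least ⌊log_p(a_{j+1})⌋ + 1. -/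
open Nat Finset

private lemma pair_lemma (p a b : ℕ) (hp : p.Prime) (hb : 1 ≤ b) :
    (∀ t, 1 ≤ t → t ≤ b → p ∣ (a + t).choose t) ↔
      Nat.log p b + 1 ≤ padicValNat p (a + 1) := by
  haveI : Fact p.Prime := ⟨hp⟩
  constructor
  · intro h
    set e := padicValNat p (a + 1) with he
    by_contra hcon
    push_neg at hcon
    have heL : e ≤ Nat.log p b := by omega
    -- p ∣ a + 1, so 1 ≤ e
    have hp1 : p ∣ a + 1 := by
      have := h 1 le_rfl hb
      rwa [Nat.choose_one_right] at this
    have he1 : 1 ≤ e := one_le_padicValNat_of_dvd (show a + 1 ≠ 0 by omega) hp1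
    -- p^e ∣ a+1 and p^(e+1) ∤ a+1
    have hpe : p ^ e ∣ a + 1 := pow_padicValNat_dvd
    have hpe1 : ¬ p ^ (e + 1) ∣ a + 1 := by
      intro hdvd
      have := (Nat.Prime.pow_dvd_iff_le_factorization hp (show a + 1 ≠ 0 by omega)).1 hdvd
      rw [Nat.factorization_def _ hp] at this
      omega
    obtain ⟨u, hu⟩ := hpe
    have hpu : ¬ p ∣ u := by
      intro hd
      obtain ⟨w, hw⟩ := hd
      exact hpe1 ⟨w, by rw [hu, hw, pow_succ]; ring⟩
    -- t = p^e is in range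
    have htb : p ^ e ≤ b := le_trans (Nat.pow_le_pow_right hp.pos heL)
      (Nat.pow_log_le_self p (by omega))
    have hdvdC : p ∣ (a + p ^ e).choose (p ^ e) := h _ (Nat.one_le_pow _ _ hp.pos) htb
    -- show valuation of this choose is 0 via Kummer
    have hval : padicValNat p ((a + p ^ e).choose (p ^ e)) = 0 := by
      rw [padicValNat_choose' (b := Nat.log p (a + p ^ e) + 1) (lt_succ_self _)]
      rw [Finset.card_eq_zero, Finset.filter_eq_empty_iff]
      intro i hi
      simp only [Finset.mem_Ico] at hi
      rw [not_le]
      have hpi : 0 < p ^ i := Nat.pow_pos hp.pos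
      rcases le_or_gt i e with hie | hie
      · -- i ≤ e : p^e % p^i = 0, and a % p^i < p^i
        have h0 : p ^ e % p ^ i = 0 := Nat.eq_zero_of_dvd_of_lt (Nat.dvd_mod_iff (dvd_refl (p ^ i)) |>.2 (pow_dvd_pow p hie)) (Nat.mod_lt _ hpi)
        simp only [h0, Nat.zero_add]
        exact Nat.mod_lt a hpi
      · -- e < i
        have hmod1 : p ^ e % p ^ i = p ^ e :=
          Nat.mod_eq_of_lt (Nat.pow_lt_pow_right hp.one_lt hie)
        have hsplit : p ^ i = p ^ e * p ^ (i - e) := by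
          rw [← pow_add]; congr 1; omega
        set v := u % p ^ (i - e) with hv
        have hvlt : v < p ^ (i - e) := Nat.mod_lt _ (Nat.pow_pos hp.pos)
        have hv1 : 1 ≤ v := by
          rcases Nat.eq_zero_or_pos v with h0 | h0
          · exact absurd (dvd_trans (dvd_pow_self p (by omega : i - e ≠ 0))
              (Nat.dvd_of_mod_eq_zero h0)) hpu
          · exact h0
        have hr : (a + 1) % p ^ i = p ^ e * v := by
          rw [hu, hsplit, Nat.mul_mod_mul_left]
        have hv0 : 1 ≤ p ^ e * v := Nat.mul_pos (Nat.pow_pos hp.pos) hv1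
        have hmul : p ^ e * (v + 1) = p ^ e * v + p ^ e := Nat.mul_succ _ _
        have h2 : p ^ e * (v + 1) ≤ p ^ i := by
          rw [hsplit]; exact Nat.mul_le_mul_left _ (by omega)
        have ha : a % p ^ i = p ^ e * v - 1 := by
          have hdm := Nat.div_add_mod (a + 1) (p ^ i)
          rw [hr] at hdm
          have haeq : a = (p ^ e * v - 1) + p ^ i * ((a + 1) / p ^ i) := by omega
          rw [haeq, Nat.add_comm, Nat.mul_add_mod, Nat.mod_eq_of_lt (by omega)]
        rw [hmod1, ha]
        omega
    have hCpos : 0 < (a + p ^ e).choose (p ^ e) := Nat.choose_pos (Nat.le_add_left _ _)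
    have := one_le_padicValNat_of_dvd hCpos.ne' hdvdC
    omega
  · intro h t ht1 htb
    have hC : (a + t).choose t ≠ 0 := (Nat.choose_pos (Nat.le_add_left t a)).ne'
    have hC' : (a + t).choose (t - 1) ≠ 0 :=
      (Nat.choose_pos (le_trans (Nat.sub_le t 1) (Nat.le_add_left t a))).ne'
    have hid : (a + t).choose t * t = (a + t).choose (t - 1) * (a + 1) := by
      have := Nat.choose_succ_right_eq (a + t) (t - 1)
      have ht : t - 1 + 1 = t := by omega
      rw [ht] at this
      rw [this]
      congr 1
      omega
    have hvt : padicValNat p t ≤ Nat.log p b := by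
      have hd : p ^ padicValNat p t ∣ t := pow_padicValNat_dvd
      have : p ^ padicValNat p t ≤ b := le_trans (Nat.le_of_dvd (by omega) hd) htb
      exact (Nat.le_log_iff_pow_le hp.one_lt (by omega)).2 this
    have hveq : padicValNat p ((a + t).choose t) + padicValNat p t =
        padicValNat p ((a + t).choose (t - 1)) + padicValNat p (a + 1) := by
      rw [← padicValNat.mul hC (by omega), ← padicValNat.mul hC' (Nat.succ_ne_zero a), hid]
    have : 1 ≤ padicValNat p ((a + t).choose t) := by omega
    exact dvd_trans (dvd_pow_self p (by omega : padicValNat p ((a + t).choose t) ≠ 0))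
      pow_padicValNat_dvd

theorem stmt_16 (p m : ℕ) (hp : p.Prime) (hm : 2 ≤ m) (a : ℕ → ℕ)
    (hanti : ∀ j, 1 ≤ j → j ≤ m - 1 → a (j + 1) ≤ a j)
    (hpos : 1 ≤ a m) :
    p ∣ (Finset.Icc 1 (m - 1)).gcd
          (fun j => (Finset.Icc 1 (a (j + 1))).gcd (fun t => (a j + t).choose t)) ↔
      ∀ j, 1 ≤ j → j ≤ m - 1 →
        Nat.log p (a (j + 1)) + 1 ≤ padicValNat p (a j + 1) := by
  -- all relevant a (j+1) are ≥ 1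
  have hchain : ∀ d i, i + d = m → 2 ≤ i → a m ≤ a i := by
    intro d
    induction d with
    | zero =>
      intro i hi _
      have : i = m := by omega
      rw [this]
    | succ d ih =>
      intro i hi h2
      have h1 : a m ≤ a (i + 1) := ih (i + 1) (by omega) (by omega)
      exact le_trans h1 (hanti i (by omega) (by omega))
  have hge : ∀ j, 1 ≤ j → j ≤ m - 1 → 1 ≤ a (j + 1) := by
    intro j hj1 hj2
    exact le_trans hpos (hchain (m - (j + 1)) (j + 1) (by omega) (by omega))
  rw [Finset.dvd_gcd_iff]
  constructor
  · intro h j hj1 hj2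
    have := h j (Finset.mem_Icc.2 ⟨hj1, hj2⟩)
    rw [Finset.dvd_gcd_iff] at this
    exact (pair_lemma p (a j) (a (j + 1)) hp (hge j hj1 hj2)).1
      (fun t ht1 htb => this t (Finset.mem_Icc.2 ⟨ht1, htb⟩))
  · intro h j hj
    rw [Finset.mem_Icc] at hj
    rw [Finset.dvd_gcd_iff]
    intro t ht
    rw [Finset.mem_Icc] at ht
    exact (pair_lemma p (a j) (a (j + 1)) hp (hge j hj.1 hj.2)).2
      (h j hj.1 hj.2) t ht.1 ht.2
end
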